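/- If (x_0, ν_0, η_0) is an invariant state of the fluid equations with arrival rate λ ∈ (0,∞), and p = ∫_0^{(x_0-1)^+} h^r((F^{λη*})^{-1}(y)) dy, then ν_0(dx) = (λ - p)(1-G^s(x))dx, and moreover λ - p = λ ∧ 1, so ν_0 = (λ∧1)ν*. -/

import Mathlib

open Set MeasureTheory Filter
open scoped Topology BoundedContinuousFunction

/-!
Letting `t → ∞` in the invariance identity kills the first term, because the residual-service
ratio `(1 - G(x+t)) / (1 - G x)` is bounded by `1` and tends to `0` (`1 - G` is integrable and
monotone, so `G → 1`). Hence `∫ f dν₀ = (λ - p) ∫_0^∞ f (1 - G)` for every bounded continuous `f`,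
which identifies `ν₀`; taking `f = 1` gives `⟨1, ν₀⟩ = λ - p`, and the non-idling condition then
forces `λ - p = λ ∧ 1`.
-/

lemma sub_eq_min_one_of_nonidling {lam p x0 : ℝ} (hp : 0 ≤ p) (hpzero : x0 ≤ 1 → p = 0)
    (h : 1 - (lam - p) = max (1 - x0) 0) : lam - p = min lam 1 := by
  rcases le_or_gt x0 1 with hx0 | hx0
  · rw [hpzero hx0, max_eq_left (by linarith)] at *
    rw [min_eq_left (by linarith)]
    ring
  · rw [max_eq_right (by linarith)] at h
    rw [min_eq_right (by linarith)]
    linarith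

lemma Monotone.tendsto_atTop_one_of_integrableOn_one_sub {G : ℝ → ℝ} {a : ℝ}
    (hmono : Monotone G) (hle : ∀ x, G x ≤ 1) (hint : IntegrableOn (fun x => 1 - G x) (Ioi a)) :
    Tendsto G atTop (𝓝 1) := by
  have hbdd : BddAbove (range G) := ⟨1, by rintro _ ⟨x, rfl⟩; exact hle x⟩
  suffices hsup : ⨆ x, G x = 1 from hsup ▸ tendsto_atTop_ciSup hmono hbdd
  refine (ciSup_le hle).antisymm (not_lt.mp fun hlt => ?_)
  -- otherwise `1 - G` would dominate a positive constant on a half-line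
  have hconst : IntegrableOn (fun _ => 1 - ⨆ x, G x) (Ioi a) := by
    refine hint.mono' aestronglyMeasurable_const (ae_of_all _ fun x => ?_)
    rw [Real.norm_eq_abs, abs_of_pos (sub_pos.mpr hlt)]
    linarith [le_ciSup hbdd x]
  rw [integrableOn_const_iff, Real.volume_Ioi] at hconst
  exact hconst.elim (fun h => (sub_pos.mpr hlt).ne' (enorm_eq_zero.mp h)) (lt_irrefl _)

section Invariance

variable {G : ℝ → ℝ} {ν : Measure ℝ}

lemma integrableOn_mul_one_sub (hint : IntegrableOn (fun x => 1 - G x) (Ioi 0)) (f : ℝ →ᵇ ℝ) :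
    IntegrableOn (fun x => f x * (1 - G x)) (Ioi 0) :=
  hint.bdd_mul f.continuous.aestronglyMeasurable (ae_of_all _ f.norm_coe_le_norm)

lemma tendsto_integral_shift_mul_ratio [IsFiniteMeasure ν] (hmono : Monotone G)
    (hle : ∀ x, G x ≤ 1) (hlim : Tendsto G atTop (𝓝 1)) (hlt : ∀ᵐ x ∂ν, G x < 1) (f : ℝ →ᵇ ℝ) :
    Tendsto (fun t => ∫ x, f (x + t) * ((1 - G (x + t)) / (1 - G x)) ∂ν) atTop (𝓝 0) := by
  have hratio : ∀ x t, G x < 1 → 0 ≤ t →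
      0 ≤ (1 - G (x + t)) / (1 - G x) ∧ (1 - G (x + t)) / (1 - G x) ≤ 1 := fun x t hx ht =>
    ⟨div_nonneg (by linarith [hle (x + t)]) (by linarith),
      (div_le_one (by linarith)).mpr (by linarith [hmono (le_add_of_nonneg_right ht : x ≤ x + t)])⟩
  rw [← integral_zero ℝ ℝ]
  refine tendsto_integral_filter_of_dominated_convergence (fun _ => ‖f‖) ?_ ?_
    (integrable_const _) ?_
  · refine Eventually.of_forall fun t => ?_
    have hG : Measurable G := hmono.measurable
    exact ((f.continuous.comp (continuous_add_const t)).measurable.mul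
      ((measurable_const.sub (hG.comp (measurable_add_const t))).div
        (measurable_const.sub hG))).aestronglyMeasurable
  · filter_upwards [eventually_ge_atTop 0] with t ht
    filter_upwards [hlt] with x hx
    obtain ⟨h0, h1⟩ := hratio x t hx ht
    rw [norm_mul, Real.norm_of_nonneg h0]
    exact (mul_le_mul_of_nonneg_right (f.norm_coe_le_norm _) h0).trans
      (mul_le_of_le_one_right (norm_nonneg _) h1)
  · filter_upwards [hlt] with x hx
    have hnum : Tendsto (fun t => (1 - G (x + t)) / (1 - G x)) atTop (𝓝 0) := by
      simpa using ((tendsto_const_nhds (x := (1 : ℝ))).sub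
        (hlim.comp (tendsto_atTop_add_const_left atTop x tendsto_id))).div_const (1 - G x)
    refine squeeze_zero_norm' ?_ (hnum.const_mul ‖f‖ |>.trans (by rw [mul_zero]))
    filter_upwards [eventually_ge_atTop 0] with t ht
    rw [norm_mul, Real.norm_of_nonneg (hratio x t hx ht).1]
    exact mul_le_mul_of_nonneg_right (f.norm_coe_le_norm _) (hratio x t hx ht).1

lemma integral_eq_mul_integral_of_invariant [IsFiniteMeasure ν] (hmono : Monotone G)
    (hle : ∀ x, G x ≤ 1) (hint : IntegrableOn (fun x => 1 - G x) (Ioi 0))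
    (hlt : ∀ᵐ x ∂ν, G x < 1) {c : ℝ} (f : ℝ →ᵇ ℝ)
    (hinv : ∀ t : ℝ, 0 ≤ t → ∫ x, f x ∂ν
      = (∫ x, f (x + t) * ((1 - G (x + t)) / (1 - G x)) ∂ν) + c * ∫ s in 0..t, f s * (1 - G s)) :
    ∫ x, f x ∂ν = c * ∫ x in Ioi 0, f x * (1 - G x) := by
  have hlim := tendsto_integral_shift_mul_ratio hmono hle
    (hmono.tendsto_atTop_one_of_integrableOn_one_sub hle hint) hlt f |>.add
    ((intervalIntegral_tendsto_integral_Ioi 0 (integrableOn_mul_one_sub hint f)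
      tendsto_id).const_mul c)
  rw [zero_add] at hlim
  exact tendsto_nhds_unique
    (tendsto_const_nhds.congr' (eventually_ge_atTop 0 |>.mono hinv)) hlim

end Invariance

lemma eq_withDensity_ofReal_of_forall_integral_eq {Ω : Type*} [MeasurableSpace Ω]
    [TopologicalSpace Ω] [HasOuterApproxClosed Ω] [BorelSpace Ω] {μ ν : Measure Ω}
    [IsFiniteMeasure ν] {ρ : Ω → ℝ} (hρ : Integrable ρ μ) (hρ0 : 0 ≤ᵐ[μ] ρ)
    (h : ∀ f : Ω →ᵇ ℝ, ∫ x, f x ∂ν = ∫ x, ρ x * f x ∂μ) :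
    ν = μ.withDensity fun x => ENNReal.ofReal (ρ x) := by
  have := isFiniteMeasure_withDensity_ofReal hρ.2
  refine ext_of_forall_integral_eq_of_IsFiniteMeasure fun f => ?_
  rw [h, integral_withDensity_eq_integral_toReal_smul₀ hρ.1.aemeasurable.ennreal_ofReal
    (ae_of_all _ fun _ => ENNReal.ofReal_lt_top)]
  refine integral_congr_ae (hρ0.mono fun x hx => ?_)
  simp [ENNReal.toReal_ofReal hx]

theorem stmt11_general (Gs : ℝ → ℝ) (lam p x0 : ℝ) (ν0 : Measure ℝ) [IsFiniteMeasure ν0]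
    (hp : 0 ≤ p) (hGmono : Monotone Gs) (hG1 : ∀ x, Gs x ≤ 1)
    (hmeanone : (∫ x in Ioi (0:ℝ), (1 - Gs x)) = 1)
    (hmean : IntegrableOn (fun x => 1 - Gs x) (Ioi 0))
    (hsuppH : ν0 {x : ℝ | 1 ≤ Gs x} = 0)
    (hinv : ∀ f : ℝ → ℝ, Continuous f → (∃ M, ∀ x, |f x| ≤ M) → ∀ t : ℝ, 0 ≤ t →
      (∫ x, f x ∂ν0)
        = (∫ x, f (x + t) * ((1 - Gs (x + t)) / (1 - Gs x)) ∂ν0)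
          + (lam - p) * ∫ s in (0:ℝ)..t, f s * (1 - Gs s))
    (hnonidling : 1 - (ν0 univ).toReal = max (1 - x0) 0)
    (hpzero : x0 ≤ 1 → p = 0) :
    ν0 = (volume.restrict (Ioi 0)).withDensity
        (fun x => ENNReal.ofReal ((lam - p) * (1 - Gs x)))
      ∧ lam - p = min lam 1 := by
  have hlt : ∀ᵐ x ∂ν0, Gs x < 1 := measure_eq_zero_iff_ae_notMem.mp hsuppH |>.mono
    fun _ hx => not_le.mp hx
  have key (f : ℝ →ᵇ ℝ) : ∫ x, f x ∂ν0 = (lam - p) * ∫ x in Ioi 0, f x * (1 - Gs x) :=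
    integral_eq_mul_integral_of_invariant hGmono hG1 hmean hlt f <| hinv f f.continuous
      ⟨‖f‖, fun x => Real.norm_eq_abs (f x) ▸ f.norm_coe_le_norm x⟩
  have hmass : (ν0 univ).toReal = lam - p :=
    (by simpa [hmeanone] using key (BoundedContinuousFunction.const ℝ 1) : ν0.real univ = _)
  refine ⟨eq_withDensity_ofReal_of_forall_integral_eq (hmean.const_mul _)
    (ae_of_all _ fun x => mul_nonneg (hmass ▸ ENNReal.toReal_nonneg) (sub_nonneg.mpr (hG1 x)))
    fun f => ?_, sub_eq_min_one_of_nonidling hp hpzero (hmass ▸ hnonidling)⟩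
  rw [key, ← integral_const_mul]
  congr 1 with x
  ring

/-- If `(x₀, ν₀, η₀)` is an invariant state of the fluid equations with arrival rate
`λ ∈ (0,∞)` and `p = ∫_0^{(x₀-1)^+} h^r((F^{λη*})^{-1}(y)) dy` is the stationary reneging
rate, then `ν₀(dx) = (λ - p)(1 - G^s(x)) dx`, and moreover `λ - p = λ ∧ 1`, so
`ν₀ = (λ ∧ 1) ν*`.  The invariance of `ν₀` is encoded by the identity
`∫ f dν₀ = ∫ f(x+t) (1-G^s(x+t))/(1-G^s(x)) ν₀(dx) + (λ-p) ∫_0^t f(s)(1-G^s(s)) ds`,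
the non-idling condition by `1 - ⟨1,ν₀⟩ = (1-x₀)^+`, and `p = 0` whenever `x₀ ≤ 1`
(the integral defining `p` is over an empty range in that case). -/
theorem stmt11 (Gs : ℝ → ℝ) (lam p x0 : ℝ) (ν0 : Measure ℝ) [IsFiniteMeasure ν0]
    (hlam : 0 < lam) (hp : 0 ≤ p) (hx0 : 0 ≤ x0)
    (hGcont : Continuous Gs) (hGmono : Monotone Gs)
    (hG0 : Gs 0 = 0) (hG1 : ∀ x, Gs x ≤ 1)
    (hmeanone : (∫ x in Ioi (0:ℝ), (1 - Gs x)) = 1)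
    (hmean : IntegrableOn (fun x => 1 - Gs x) (Ioi 0))
    (hsupp0 : ν0 (Iio 0) = 0) (hsuppH : ν0 {x : ℝ | 1 ≤ Gs x} = 0)
    (hinv : ∀ f : ℝ → ℝ, Continuous f → (∃ M, ∀ x, |f x| ≤ M) → ∀ t : ℝ, 0 ≤ t →
      (∫ x, f x ∂ν0)
        = (∫ x, f (x + t) * ((1 - Gs (x + t)) / (1 - Gs x)) ∂ν0)
          + (lam - p) * ∫ s in (0:ℝ)..t, f s * (1 - Gs s))
    (hnonidling : 1 - (ν0 univ).toReal = max (1 - x0) 0)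
    (hpzero : x0 ≤ 1 → p = 0) :
    ν0 = (volume.restrict (Ioi 0)).withDensity
        (fun x => ENNReal.ofReal ((lam - p) * (1 - Gs x)))
      ∧ lam - p = min lam 1 :=
  stmt11_general Gs lam p x0 ν0 hp hGmono hG1 hmeanone hmean hsuppH hinv hnonidling hpzero
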